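/- arXiv:math/9808039 — 2 statements merged into one kernel-verified Lean document; each statement's English description precedes it below -/
import Mathlib

section
/- Let G be a connected semisimple Lie group with finite center, K a maximal compact subgroup such that G/K is an irreducible hermitian symmetric space, g = k + p the Cartan decomposition, k = k_s + z_k with z_k the one-dimensional center of k, and Z^J ∈ z_k the element defining the complex structure J on p. Write Z^J = Z⁰ + Z' where Z⁰ ∈ [a, Ja] for a maximal abelian subspace a ⊆ p and Z' centralizes a. Then Z⁰ is orthogonal to Z' with respect to the Killing form, and if Z' ≠ 0, then Z' ∉ k_s. -/
/-- In a hermitian symmetric situation, write `Z^J = Z⁰ + Z'` with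
`Z⁰ ∈ [a, Ja] ⊆ ad(a)g` and `Z'` centralizing the maximal abelian `a ⊆ p`.  Using
that `Z^J` is Killing-orthogonal to `k_s` and the Killing form is (negative)
definite on `k_s`, one gets: `Z⁰ ⊥ Z'` w.r.t. the Killing form, and if `Z' ≠ 0`
then `Z' ∉ k_s`. -/
theorem stmt_3 {L : Type*} [LieRing L] [LieAlgebra ℝ L] [Module.Finite ℝ L]
    (ks zk : Submodule ℝ L) (a : Submodule ℝ L)
    (ZJ Z0 Z' : L)
    (hZJ : ZJ ∈ zk) (hsum : ZJ = Z0 + Z')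
    (hZ0 : Z0 ∈ Submodule.span ℝ {x : L | ∃ A ∈ a, ∃ y : L, x = ⁅A, y⁆})
    (hcent : ∀ A ∈ a, ⁅Z', A⁆ = 0)
    (horth : ∀ x ∈ ks, killingForm ℝ L ZJ x = 0)
    (hdef : ∀ x ∈ ks, killingForm ℝ L x x = 0 → x = 0) :
    killingForm ℝ L Z0 Z' = 0 ∧ (Z' ≠ 0 → Z' ∉ ks) := by
  have key0 : ∀ w ∈ Submodule.span ℝ {x : L | ∃ A ∈ a, ∃ y : L, x = ⁅A, y⁆},
      killingForm ℝ L w Z' = 0 := by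
    intro w hw
    induction hw using Submodule.span_induction with
    | mem x hx =>
      obtain ⟨A, hA, y, rfl⟩ := hx
      rw [LieModule.traceForm_apply_lie_apply' ℝ L L A y Z',
        show ⁅A, Z'⁆ = 0 by rw [← neg_eq_zero, ← lie_skew]; simpa using hcent A hA]
      simp
    | zero => simp
    | add x y _ _ hx hy => rw [map_add, LinearMap.add_apply, hx, hy, add_zero]
    | smul c x _ hx => rw [map_smul, LinearMap.smul_apply, hx, smul_zero]
  have key := key0 Z0 hZ0
  refine ⟨key, fun hne hmem => hne ?_⟩
  apply hdef Z' hmem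
  have := horth Z' hmem
  rw [hsum, map_add, LinearMap.add_apply, key, zero_add] at this
  exact this
end

section
/- Let Spin(8) act transitively on the unit sphere S⁷ with isotropy group Spin(7) (via the spin representation on ℝ⁸). Since the isotropy action of Spin(7) on the tangent space T_p(S⁷) ≅ ℝ⁷ is transitive on the unit sphere of ℝ⁷, for every tangent vector v ∈ T_p(S⁷) there exists h ∈ Spin(7) with dh(v) = -v; hence S⁷ = Spin(8)/Spin(7) is weakly symmetric with respect to Spin(8) (with μ = identity). -/
open scoped RealInnerProductSpace

/-- `S⁷ = Spin(8)/Spin(7)`: let `G` be a group of linear isometries of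
`ℝ⁸` acting transitively on the unit sphere `S⁷` (as `Spin(8)` does, through `SO(8)`),
with isotropy subgroup at `p ∈ S⁷` (the image of `Spin(7)`) acting transitively on
the unit sphere of the tangent space `T_p S⁷ = p^⊥`.  Then every tangent vector at
`p` is reversed by an isotropy element, and hence `S⁷` is weakly symmetric with
respect to `G` (with `μ = id`): any two points of the sphere can be swapped by `G`. -/
theorem stmt_16
    (G : Subgroup ((EuclideanSpace ℝ (Fin 8)) ≃ₗᵢ[ℝ] (EuclideanSpace ℝ (Fin 8))))
    (htrans : ∀ x y : EuclideanSpace ℝ (Fin 8), ‖x‖ = 1 → ‖y‖ = 1 →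
      ∃ g ∈ G, g x = y)
    (p : EuclideanSpace ℝ (Fin 8)) (hp : ‖p‖ = 1)
    (hisotrans : ∀ v w : EuclideanSpace ℝ (Fin 8),
      ⟪p, v⟫ = 0 → ⟪p, w⟫ = 0 → ‖v‖ = 1 → ‖w‖ = 1 →
        ∃ h ∈ G, h p = p ∧ h v = w) :
    (∀ v : EuclideanSpace ℝ (Fin 8), ⟪p, v⟫ = 0 →
        ∃ h ∈ G, h p = p ∧ h v = -v) ∧
      (∀ x y : EuclideanSpace ℝ (Fin 8), ‖x‖ = 1 → ‖y‖ = 1 →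
        ∃ g ∈ G, g x = y ∧ g y = x) := by
  have part1 : ∀ v : EuclideanSpace ℝ (Fin 8), ⟪p, v⟫ = 0 →
      ∃ h ∈ G, h p = p ∧ h v = -v := by
    intro v hv
    rcases eq_or_ne v 0 with rfl | hv0
    · exact ⟨1, G.one_mem, rfl, by simp⟩
    · have hnv : ‖v‖ ≠ 0 := norm_ne_zero_iff.mpr hv0
      obtain ⟨h, hG, hp', hv'⟩ := hisotrans (‖v‖⁻¹ • v) (-(‖v‖⁻¹ • v))
        (by simp [inner_smul_right, hv])
        (by simp [inner_smul_right, hv])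
        (by simp [norm_smul, abs_of_nonneg, inv_mul_cancel₀ hnv])
        (by simp [norm_smul, abs_of_nonneg, inv_mul_cancel₀ hnv])
      refine ⟨h, hG, hp', ?_⟩
      have := congrArg (fun z => ‖v‖ • z) hv'
      simpa [map_smul, smul_smul, smul_neg, mul_inv_cancel₀ hnv] using this
  refine ⟨part1, ?_⟩
  intro x y hx hy
  -- find a unit "midpoint direction" m with x + y = (2 * ⟪m, x⟫) • m
  obtain ⟨m, hm, hmx⟩ :
      ∃ m : EuclideanSpace ℝ (Fin 8), ‖m‖ = 1 ∧ x + y = (2 * ⟪m, x⟫) • m := by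
    rcases eq_or_ne (x + y) 0 with hxy | hxy
    · -- y = -x : pick any unit vector orthogonal to x
      have hne : ((ℝ ∙ x)ᗮ : Submodule ℝ (EuclideanSpace ℝ (Fin 8))) ≠ ⊥ := by
        intro hbot
        have h1 : Module.finrank ℝ (ℝ ∙ x)
            + Module.finrank ℝ ((ℝ ∙ x)ᗮ : Submodule ℝ (EuclideanSpace ℝ (Fin 8)))
            = Module.finrank ℝ (EuclideanSpace ℝ (Fin 8)) :=
          Submodule.finrank_add_finrank_orthogonal _
        have hx0 : x ≠ 0 := by
          intro h0; rw [h0, norm_zero] at hx; norm_num at hx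
        rw [hbot, finrank_bot, finrank_span_singleton hx0,
          finrank_euclideanSpace_fin] at h1
        norm_num at h1
      obtain ⟨q₀, hq₀mem, hq₀⟩ := Submodule.ne_bot_iff _ |>.mp hne
      have hnq : ‖q₀‖ ≠ 0 := norm_ne_zero_iff.mpr hq₀
      refine ⟨‖q₀‖⁻¹ • q₀, by simp [norm_smul, inv_mul_cancel₀ hnq], ?_⟩
      have hqx : ⟪q₀, x⟫ = 0 := by
        have := (Submodule.mem_orthogonal _ _).mp hq₀mem x
          (Submodule.mem_span_singleton_self x)
        rw [real_inner_comm]; exact this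
      rw [hxy, inner_smul_left, hqx]
      simp
    · have hne : ‖x + y‖ ≠ 0 := norm_ne_zero_iff.mpr hxy
      refine ⟨‖x + y‖⁻¹ • (x + y), by
        rw [norm_smul, Real.norm_eq_abs, abs_inv, abs_norm, inv_mul_cancel₀ hne], ?_⟩
      have hkey : 2 * ⟪x + y, x⟫ = ‖x + y‖ ^ 2 := by
        have h1 : ⟪x + y, x + y⟫ = ‖x + y‖ ^ 2 := real_inner_self_eq_norm_sq _
        have h2 : ⟪x, x⟫ = 1 := by
          rw [real_inner_self_eq_norm_sq, hx]; norm_num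
        have h3 : ⟪y, y⟫ = 1 := by
          rw [real_inner_self_eq_norm_sq, hy]; norm_num
        have h4 : ⟪x, y⟫ = ⟪y, x⟫ := real_inner_comm _ _
        rw [inner_add_add_self] at h1
        rw [inner_add_left, h2]
        linarith
      rw [real_inner_smul_left, smul_smul]
      have hn2 : ‖x + y‖ * ‖x + y‖ ≠ 0 := mul_ne_zero hne hne
      rw [show (2 * (‖x + y‖⁻¹ * ⟪x + y, x⟫) * ‖x + y‖⁻¹)
          = (2 * ⟪x + y, x⟫) / (‖x + y‖ * ‖x + y‖) by ring, hkey]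
      rw [show ‖x + y‖ ^ 2 = ‖x + y‖ * ‖x + y‖ by ring, div_self hn2, one_smul]
  obtain ⟨g₀, hg₀G, hg₀p⟩ := htrans p m hp hm
  set α : ℝ := ⟪m, x⟫ with hα
  set v : EuclideanSpace ℝ (Fin 8) := g₀.symm x - α • p with hvdef
  have hg₀sm : g₀.symm m = p := by
    rw [← hg₀p]; exact g₀.symm_apply_apply p
  have hpv : ⟪p, v⟫ = 0 := by
    rw [hvdef, inner_sub_right, inner_smul_right]
    have h1 : ⟪p, g₀.symm x⟫ = ⟪g₀ p, x⟫ := by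
      rw [← g₀.inner_map_map p (g₀.symm x), g₀.apply_symm_apply]
    have h2 : ⟪p, p⟫ = 1 := by
      rw [real_inner_self_eq_norm_sq, hp]; norm_num
    rw [h1, hg₀p, h2, hα]; ring
  have hxv : g₀.symm x = α • p + v := by rw [hvdef]; abel
  have hyv : g₀.symm y = α • p - v := by
    have h1 : g₀.symm (x + y) = (2 * α) • p := by
      rw [hmx, map_smul, hg₀sm, hα]
    rw [map_add, hxv] at h1
    have : g₀.symm y = (2 * α) • p - (α • p + v) := by
      rw [← h1]; abel
    rw [this, two_mul, add_smul]; abel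
  obtain ⟨h, hhG, hhp, hhv⟩ := part1 v hpv
  refine ⟨g₀ * h * g₀⁻¹, mul_mem (mul_mem hg₀G hhG) (inv_mem hg₀G), ?_, ?_⟩
  · show g₀ (h (g₀⁻¹ x)) = y
    have : (g₀⁻¹ : EuclideanSpace ℝ (Fin 8) ≃ₗᵢ[ℝ] EuclideanSpace ℝ (Fin 8)) = g₀.symm := rfl
    rw [this, hxv, map_add, map_smul, hhp, hhv, ← sub_eq_add_neg, ← hyv,
      g₀.apply_symm_apply]
  · show g₀ (h (g₀⁻¹ y)) = x
    have : (g₀⁻¹ : EuclideanSpace ℝ (Fin 8) ≃ₗᵢ[ℝ] EuclideanSpace ℝ (Fin 8)) = g₀.symm := rfl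
    rw [this, hyv, sub_eq_add_neg, map_add, map_smul, map_neg, hhp, hhv, neg_neg,
      ← hxv, g₀.apply_symm_apply]
end
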